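/- If f is analytic on the unit disk with Re f(z) < 1 and a_0 = f(0) \in (0,1), then a_0^2 + \sum_{n=1}^\infty |a_n| r^n + \frac{16 a_0}{9(1 - a_0)} \sum_{n=1}^\infty n |a_n|^2 r^{2n} \le 1 for all r \le 1/3. -/

import Mathlib

open Metric

set_option maxRecDepth 4000

open Complex intervalIntegral Real Metric

lemma integral_exp_int_mul (m : ℤ) :
    ∫ t in (0:ℝ)..(2*π), Complex.exp ((m:ℂ) * t * I) =
      if m = 0 then (2*π : ℂ) else 0 := by
  rcases eq_or_ne m 0 with h | h
  · simp [h]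
  · have hc : (m:ℂ) * I ≠ 0 := by
      simp [Complex.ext_iff, I_ne_zero, h]
    rw [if_neg h]
    have h2 : ∀ t : ℝ, (m:ℂ) * t * I = ((m:ℂ)*I) * t := by intro t; ring
    simp_rw [h2]
    rw [integral_exp_mul_complex hc]
    have h3 : ((m:ℂ)*I) * ((2*π : ℝ) : ℂ) = (m:ℂ) * (2*π*I) := by push_cast; ring
    rw [h3, Complex.exp_int_mul_two_pi_mul_I]
    simp

section
variable (f : ℂ → ℂ) (a : ℕ → ℂ)
  (hsum : ∀ z ∈ ball (0 : ℂ) 1, HasSum (fun n => a n * z ^ n) (f z))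
  (ρ : ℝ) (hρ0 : 0 ≤ ρ) (hρ1 : ρ < 1)

include hsum hρ0 hρ1

lemma summable_abs_rpow : Summable (fun k => ‖a k‖ * ρ ^ k) := by
  have hz : ((ρ:ℂ)) ∈ ball (0:ℂ) 1 := by
    simp only [mem_ball, dist_zero_right, norm_mul, norm_pow, Complex.norm_real, Real.norm_eq_abs]
    rwa [_root_.abs_of_nonneg hρ0]
  have := ((hsum _ hz).summable).norm
  · simpa [norm_mul, norm_pow, map_mul, map_pow, Complex.norm_real, Real.norm_eq_abs,
      _root_.abs_of_nonneg hρ0] using this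

omit hsum in
lemma mem_ball_rho (t : ℝ) : (ρ:ℂ) * Complex.exp (t * I) ∈ ball (0:ℂ) 1 := by
  simp only [mem_ball, dist_zero_right, norm_mul, norm_pow, map_mul,
    Complex.norm_real, Real.norm_eq_abs, Complex.norm_exp_ofReal_mul_I, mul_one]
  rwa [_root_.abs_of_nonneg hρ0]

lemma fourier_coeff (n₀ : ℕ) :
    ∫ t in (0:ℝ)..(2*π), f ((ρ:ℂ) * Complex.exp (t * I)) *
        Complex.exp (-(n₀:ℂ) * t * I) = (2*π : ℝ) * (a n₀ * (ρ:ℂ) ^ n₀) := by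
  set F : ℕ → ℝ → ℂ := fun k t =>
    a k * ((ρ:ℂ) * Complex.exp (t * I)) ^ k * Complex.exp (-(n₀:ℂ) * t * I) with hF
  have habs : ∀ k t, ‖F k t‖ = ‖a k‖ * ρ ^ k := by
    intro k t
    simp [hF, norm_mul, norm_pow, map_mul, map_pow, Complex.norm_real, Real.norm_eq_abs,
      Complex.norm_exp_ofReal_mul_I, _root_.abs_of_nonneg hρ0, Complex.norm_exp]
  have hS : HasSum (fun k => ∫ t in (0:ℝ)..(2*π), F k t)
      (∫ t in (0:ℝ)..(2*π), f ((ρ:ℂ) * Complex.exp (t * I)) *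
        Complex.exp (-(n₀:ℂ) * t * I)) := by
    apply intervalIntegral.hasSum_integral_of_dominated_convergence
      (bound := fun k _ => ‖a k‖ * ρ ^ k)
    · intro k
      apply Continuous.aestronglyMeasurable
      fun_prop
    · intro k
      filter_upwards with t _
      exact (habs k t).le
    · filter_upwards with t _
      exact summable_abs_rpow f a hsum ρ hρ0 hρ1
    · exact intervalIntegrable_const
    · filter_upwards with t _
      exact (hsum _ (mem_ball_rho ρ hρ0 hρ1 t)).mul_right _
  have hval : ∀ k, (∫ t in (0:ℝ)..(2*π), F k t) =
      if k = n₀ then ((2*π : ℝ) : ℂ) * (a n₀ * (ρ:ℂ) ^ n₀) else 0 := by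
    intro k
    have hexp : ∀ t : ℝ, F k t =
        (a k * (ρ:ℂ)^k) * Complex.exp ((((k:ℤ) - (n₀:ℤ) : ℤ):ℂ) * t * I) := by
      intro t
      have harg : ((k:ℂ)*((t:ℂ)*I)) + (-(n₀:ℂ)*(t:ℂ)*I) = (((k:ℤ) - (n₀:ℤ) : ℤ):ℂ) * t * I := by
        push_cast; ring
      calc F k t = (a k * (ρ:ℂ)^k) *
            (Complex.exp ((k:ℂ)*((t:ℂ)*I)) * Complex.exp (-(n₀:ℂ)*(t:ℂ)*I)) := by
            simp only [hF]; rw [mul_pow, ← Complex.exp_nat_mul]; ring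
        _ = _ := by rw [← Complex.exp_add, harg]
    simp_rw [hexp]
    rw [intervalIntegral.integral_const_mul, integral_exp_int_mul]
    by_cases hk : k = n₀
    · subst hk; simp; ring
    · have : (k:ℤ) - (n₀:ℤ) ≠ 0 := by
        omega
      rw [if_neg this, if_neg hk, mul_zero]
  simp_rw [hval] at hS
  exact hS.unique (hasSum_ite_eq n₀ _)

lemma fourier_coeff_conj (n₀ : ℕ) (hn : 1 ≤ n₀) :
    ∫ t in (0:ℝ)..(2*π), (starRingEnd ℂ) (f ((ρ:ℂ) * Complex.exp (t * I))) *
        Complex.exp (-(n₀:ℂ) * t * I) = 0 := by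
  set F : ℕ → ℝ → ℂ := fun k t =>
    (starRingEnd ℂ) (a k * ((ρ:ℂ) * Complex.exp (t * I)) ^ k) *
      Complex.exp (-(n₀:ℂ) * t * I) with hF
  have habs : ∀ k t, ‖F k t‖ = ‖a k‖ * ρ ^ k := by
    intro k t
    simp [hF, norm_mul, norm_pow, map_mul, map_pow, Complex.norm_real, Real.norm_eq_abs,
      Complex.norm_exp_ofReal_mul_I, _root_.abs_of_nonneg hρ0, Complex.norm_exp]
  have hS : HasSum (fun k => ∫ t in (0:ℝ)..(2*π), F k t)
      (∫ t in (0:ℝ)..(2*π), (starRingEnd ℂ) (f ((ρ:ℂ) * Complex.exp (t * I))) *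
        Complex.exp (-(n₀:ℂ) * t * I)) := by
    apply intervalIntegral.hasSum_integral_of_dominated_convergence
      (bound := fun k _ => ‖a k‖ * ρ ^ k)
    · intro k
      apply Continuous.aestronglyMeasurable
      simp only [hF, starRingEnd_apply]
      fun_prop
    · intro k
      filter_upwards with t _
      exact (habs k t).le
    · filter_upwards with t _
      exact summable_abs_rpow f a hsum ρ hρ0 hρ1
    · exact intervalIntegrable_const
    · filter_upwards with t _
      exact (Complex.hasSum_conj'.mpr (hsum _ (mem_ball_rho ρ hρ0 hρ1 t))).mul_right _
  have hval : ∀ k, (∫ t in (0:ℝ)..(2*π), F k t) = 0 := by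
    intro k
    have hexp : ∀ t : ℝ, F k t =
        ((starRingEnd ℂ) (a k) * (ρ:ℂ)^k) *
          Complex.exp (((-(k:ℤ) - (n₀:ℤ) : ℤ):ℂ) * t * I) := by
      intro t
      simp only [hF]
      rw [map_mul, map_pow, map_mul, Complex.conj_ofReal, ← Complex.exp_conj]
      have hc : (starRingEnd ℂ) ((t:ℂ)*I) = -((t:ℂ)*I) := by
        simp [Complex.conj_I, Complex.conj_ofReal]
      rw [hc, mul_pow, ← Complex.exp_nat_mul, mul_assoc, mul_assoc, ← Complex.exp_add]
      rw [show ((k:ℂ) * -((t:ℂ)*I) + -(n₀:ℂ)*(t:ℂ)*I)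
          = ((-(k:ℤ) - (n₀:ℤ) : ℤ):ℂ) * t * I by push_cast; ring]
      ring
    simp_rw [hexp]
    rw [intervalIntegral.integral_const_mul, integral_exp_int_mul]
    have : -(k:ℤ) - (n₀:ℤ) ≠ 0 := by omega
    rw [if_neg this, mul_zero]
  simp_rw [hval] at hS
  exact hS.unique hasSum_zero

lemma cont_f : Continuous fun t : ℝ => f ((ρ:ℂ) * Complex.exp (t * I)) := by
  have heq : (fun t : ℝ => f ((ρ:ℂ) * Complex.exp (t * I))) =
      fun t : ℝ => ∑' k, a k * ((ρ:ℂ) * Complex.exp (t * I)) ^ k := by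
    funext t
    exact ((hsum _ (mem_ball_rho ρ hρ0 hρ1 t)).tsum_eq).symm
  rw [heq]
  apply continuous_tsum (u := fun k => ‖a k‖ * ρ ^ k)
  · intro k; fun_prop
  · exact summable_abs_rpow f a hsum ρ hρ0 hρ1
  · intro k t
    simp [norm_mul, norm_pow, map_mul, map_pow, Complex.norm_real, Real.norm_eq_abs,
      Complex.norm_exp_ofReal_mul_I, _root_.abs_of_nonneg hρ0]
end


lemma intervalIntegral_conj {g : ℝ → ℂ} {a b : ℝ} :
    ∫ t in a..b, (starRingEnd ℂ) (g t) = (starRingEnd ℂ) (∫ t in a..b, g t) := by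
  simp [intervalIntegral, integral_conj, map_sub]

lemma coeff_bound (f : ℂ → ℂ) (a : ℕ → ℂ) (a₀ : ℝ)
    (hsum : ∀ z ∈ ball (0 : ℂ) 1, HasSum (fun n => a n * z ^ n) (f z))
    (hre : ∀ z ∈ ball (0 : ℂ) 1, (f z).re < 1)
    (ha0 : a 0 = (a₀ : ℂ)) (n₀ : ℕ) (hn : 1 ≤ n₀) :
    ‖a n₀‖ ≤ 2 * (1 - a₀) := by
  have step : ∀ ρ : ℝ, 0 ≤ ρ → ρ < 1 →
      ‖a n₀‖ * ρ ^ n₀ ≤ 2 * (1 - a₀) := by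
    intro ρ hρ0 hρ1
    have I0 : ∫ t in (0:ℝ)..(2*π), f ((ρ:ℂ) * Complex.exp (t*I)) = ((2*π:ℝ):ℂ) * a 0 := by
      have h := fourier_coeff f a hsum ρ hρ0 hρ1 0
      simp only [Nat.cast_zero, neg_zero, zero_mul, Complex.exp_zero, mul_one,
        pow_zero] at h
      exact h
    set w : ℝ → ℂ := fun t => (ρ:ℂ) * Complex.exp (t*I) with hw
    have hcf : Continuous fun t : ℝ => f (w t) := cont_f f a hsum ρ hρ0 hρ1
    have hce : Continuous fun t : ℝ => Complex.exp (-(n₀:ℂ)*t*I) := by fun_prop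
    have hccf : Continuous fun t : ℝ => (starRingEnd ℂ) (f (w t)) := by
      exact RCLike.continuous_conj.comp hcf
    have I1 := fourier_coeff f a hsum ρ hρ0 hρ1 n₀
    have I2 := fourier_coeff_conj f a hsum ρ hρ0 hρ1 n₀ hn
    have I3 : ∫ t in (0:ℝ)..(2*π), (2:ℂ) * Complex.exp (-(n₀:ℂ)*t*I) = 0 := by
      rw [intervalIntegral.integral_const_mul]
      have he : ∀ t : ℝ, -(n₀:ℂ)*t*I = ((-(n₀:ℤ) : ℤ):ℂ)*t*I := by
        intro t; push_cast; ring
      simp_rw [he]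
      rw [integral_exp_int_mul, if_neg (by omega), mul_zero]
    have hg : ∀ t : ℝ, ((2 - 2*(f (w t)).re : ℝ) : ℂ) * Complex.exp (-(n₀:ℂ)*t*I)
        = 2 * Complex.exp (-(n₀:ℂ)*t*I) - f (w t) * Complex.exp (-(n₀:ℂ)*t*I)
          - (starRingEnd ℂ) (f (w t)) * Complex.exp (-(n₀:ℂ)*t*I) := by
      intro t
      linear_combination (norm := (push_cast; ring))
        (Complex.exp (-(n₀:ℂ)*t*I)) * (Complex.add_conj (f (w t)))
    have hInt : ∫ t in (0:ℝ)..(2*π),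
        ((2 - 2*(f (w t)).re : ℝ):ℂ) * Complex.exp (-(n₀:ℂ)*t*I)
        = -(((2*π:ℝ):ℂ) * (a n₀ * (ρ:ℂ)^n₀)) := by
      simp_rw [hg]
      rw [intervalIntegral.integral_sub, intervalIntegral.integral_sub, I3, I1, I2]
      · ring
      · exact (continuous_const.mul hce).intervalIntegrable _ _
      · exact (hcf.mul hce).intervalIntegrable _ _
      · exact ((continuous_const.mul hce).sub (hcf.mul hce)).intervalIntegrable _ _
      · exact (hccf.mul hce).intervalIntegrable _ _
    have hnorm : ∀ t : ℝ, ‖((2 - 2*(f (w t)).re : ℝ):ℂ) * Complex.exp (-(n₀:ℂ)*t*I)‖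
        = 2 - 2*(f (w t)).re := by
      intro t
      have h2 : (f (w t)).re < 1 := hre _ (mem_ball_rho ρ hρ0 hρ1 t)
      simp only [norm_mul, norm_pow, map_mul, Complex.norm_real, Real.norm_eq_abs, Complex.norm_exp]
      have : (-(n₀:ℂ)*t*I).re = 0 := by simp
      rw [this, Real.exp_zero, mul_one, _root_.abs_of_nonneg (by linarith)]
    have hbound : ‖∫ t in (0:ℝ)..(2*π),
          ((2 - 2*(f (w t)).re : ℝ):ℂ) * Complex.exp (-(n₀:ℂ)*t*I)‖
        ≤ ∫ t in (0:ℝ)..(2*π), (2 - 2*(f (w t)).re) := by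
      have h := intervalIntegral.norm_integral_le_integral_norm
        (μ := MeasureTheory.volume)
        (f := fun t => ((2 - 2*(f (w t)).re : ℝ):ℂ) * Complex.exp (-(n₀:ℂ)*t*I))
        (by positivity : (0:ℝ) ≤ 2*π)
      simp_rw [hnorm] at h
      exact h
    have hIre : ∫ t in (0:ℝ)..(2*π), (2 - 2*(f (w t)).re) = 4*π*(1 - a₀) := by
      rw [← Complex.ofReal_inj, ← intervalIntegral.integral_ofReal]
      have hsplit : ∀ t : ℝ, ((2 - 2*(f (w t)).re : ℝ):ℂ)
          = 2 - f (w t) - (starRingEnd ℂ) (f (w t)) := by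
        intro t
        linear_combination (norm := (push_cast; ring)) (Complex.add_conj (f (w t)))
      simp_rw [hsplit]
      rw [intervalIntegral.integral_sub, intervalIntegral.integral_sub,
        intervalIntegral.integral_const, _root_.intervalIntegral_conj, I0]
      · rw [ha0]
        simp only [map_mul, Complex.conj_ofReal, sub_zero, Complex.real_smul]
        push_cast
        ring
      · exact continuous_const.intervalIntegrable _ _
      · exact hcf.intervalIntegrable _ _
      · exact (continuous_const.sub hcf).intervalIntegrable _ _
      · exact hccf.intervalIntegrable _ _
    have hval : ‖-(((2*π:ℝ):ℂ) * (a n₀ * (ρ:ℂ)^n₀))‖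
        = 2*π * (‖a n₀‖ * ρ^n₀) := by
      simp only [norm_neg, norm_mul, norm_pow, map_mul, map_pow, Complex.norm_real, Real.norm_eq_abs]
      rw [_root_.abs_of_nonneg hρ0, abs_two, _root_.abs_of_pos Real.pi_pos]
    have hfin : 2*π * (‖a n₀‖ * ρ^n₀) ≤ 4*π*(1-a₀) := by
      rw [← hval, ← hIre, ← hInt]
      exact hbound
    nlinarith [Real.pi_pos, mul_nonneg (norm_nonneg (a n₀)) (pow_nonneg hρ0 n₀)]
  have cont : Filter.Tendsto (fun ρ : ℝ => ‖a n₀‖ * ρ^n₀)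
      (nhdsWithin 1 (Set.Ioo (0:ℝ) 1)) (nhds (‖a n₀‖)) := by
    have h := Continuous.tendsto
      (f := fun ρ : ℝ => ‖a n₀‖ * ρ^n₀)
      (continuous_const.mul (continuous_pow n₀)) (1:ℝ)
    simpa using h.mono_left nhdsWithin_le_nhds
  haveI : (nhdsWithin (1:ℝ) (Set.Ioo (0:ℝ) 1)).NeBot :=
    right_nhdsWithin_Ioo_neBot (by norm_num)
  refine le_of_tendsto cont ?_
  filter_upwards [self_mem_nhdsWithin] with ρ hρ
  exact step ρ hρ.1.le hρ.2


set_option maxHeartbeats 1000000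
/-- Corollary 3: if `Re f < 1` and `a₀ = f(0) ∈ (0,1)`, then
`a₀² + ∑_{n≥1}|aₙ|rⁿ + (16a₀/(9(1-a₀))) ∑ n|aₙ|²r^{2n} ≤ 1` for `r ≤ 1/3`. -/
theorem bohr_P_area (f : ℂ → ℂ) (a : ℕ → ℂ) (a₀ : ℝ)
    (hsum : ∀ z ∈ ball (0 : ℂ) 1, HasSum (fun n => a n * z ^ n) (f z))
    (hre : ∀ z ∈ ball (0 : ℂ) 1, (f z).re < 1)
    (ha0 : a 0 = (a₀ : ℂ)) (h0 : 0 < a₀) (h1 : a₀ < 1)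
    (r : ℝ) (hr0 : 0 ≤ r) (hr : r ≤ 1 / 3) :
    a₀ ^ 2 + ∑' n : ℕ, ‖a (n + 1)‖ * r ^ (n + 1)
      + (16 * a₀ / (9 * (1 - a₀))) *
          ∑' n : ℕ, (n : ℝ) * ‖a n‖ ^ 2 * r ^ (2 * n) ≤ 1 := by
  have hC : ∀ n : ℕ, 1 ≤ n → ‖a n‖ ≤ 2 * (1 - a₀) := fun n hn =>
    coeff_bound f a a₀ hsum hre ha0 n hn
  have ha₀1 : (0:ℝ) < 1 - a₀ := by linarith
  have hC0 : (0:ℝ) ≤ 2 * (1 - a₀) := by linarith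
  have hr1 : r < 1 := by linarith
  -- first sum
  have hterm1 : ∀ n : ℕ, ‖a (n+1)‖ * r^(n+1) ≤ (2*(1-a₀)*r) * r^n := by
    intro n
    have h := hC (n+1) (by omega)
    have hpos : (0:ℝ) ≤ r^(n+1) := by positivity
    calc ‖a (n+1)‖ * r^(n+1) ≤ (2*(1-a₀)) * r^(n+1) :=
          mul_le_mul_of_nonneg_right h hpos
      _ = (2*(1-a₀)*r) * r^n := by ring
  have hgeom : Summable (fun n : ℕ => (2*(1-a₀)*r) * r^n) :=
    (summable_geometric_of_lt_one hr0 hr1).mul_left _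
  have hs1 : Summable (fun n : ℕ => ‖a (n+1)‖ * r^(n+1)) :=
    Summable.of_nonneg_of_le (fun n => by positivity) hterm1 hgeom
  have ht1 : ∑' n : ℕ, ‖a (n+1)‖ * r^(n+1) ≤ (2*(1-a₀)*r) * (1-r)⁻¹ := by
    calc ∑' n : ℕ, ‖a (n+1)‖ * r^(n+1)
        ≤ ∑' n : ℕ, (2*(1-a₀)*r) * r^n := Summable.tsum_le_tsum hterm1 hs1 hgeom
      _ = (2*(1-a₀)*r) * ∑' n : ℕ, r^n := tsum_mul_left
      _ = (2*(1-a₀)*r) * (1-r)⁻¹ := by rw [tsum_geometric_of_lt_one hr0 hr1]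
  -- second sum
  have hr20 : (0:ℝ) ≤ r^2 := sq_nonneg r
  have hr21 : ‖r^2‖ < 1 := by
    rw [Real.norm_eq_abs, _root_.abs_of_nonneg hr20]; nlinarith
  have hterm2 : ∀ n : ℕ, (n:ℝ) * ‖a n‖^2 * r^(2*n)
      ≤ (2*(1-a₀))^2 * ((n:ℝ) * (r^2)^n) := by
    intro n
    rcases Nat.eq_zero_or_pos n with h|h
    · simp [h]
    · have hb := hC n h
      have habs0 := norm_nonneg (a n)
      have h2 : ‖a n‖^2 ≤ (2*(1-a₀))^2 := by nlinarith
      have hp : r^(2*n) = (r^2)^n := by rw [← pow_mul]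
      rw [hp]
      have hx : (0:ℝ) ≤ (r^2)^n := pow_nonneg hr20 n
      have hn0 : (0:ℝ) ≤ (n:ℝ) := Nat.cast_nonneg n
      nlinarith [mul_le_mul_of_nonneg_right h2 hx]
  have hsum2' : Summable (fun n : ℕ => (2*(1-a₀))^2 * ((n:ℝ) * (r^2)^n)) := by
    apply Summable.mul_left
    have := summable_pow_mul_geometric_of_norm_lt_one (R := ℝ) 1 hr21
    simpa using this
  have hs2 : Summable (fun n : ℕ => (n:ℝ) * ‖a n‖^2 * r^(2*n)) :=
    Summable.of_nonneg_of_le (fun n => by positivity) hterm2 hsum2'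
  have ht2 : ∑' n : ℕ, (n:ℝ) * ‖a n‖^2 * r^(2*n)
      ≤ (2*(1-a₀))^2 * (r^2/(1-r^2)^2) := by
    calc ∑' n : ℕ, (n:ℝ) * ‖a n‖^2 * r^(2*n)
        ≤ ∑' n : ℕ, (2*(1-a₀))^2 * ((n:ℝ) * (r^2)^n) := Summable.tsum_le_tsum hterm2 hs2 hsum2'
      _ = (2*(1-a₀))^2 * ∑' n : ℕ, (n:ℝ) * (r^2)^n := tsum_mul_left
      _ = (2*(1-a₀))^2 * (r^2/(1-r^2)^2) := by
          rw [tsum_coe_mul_geometric_of_norm_lt_one hr21]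
  -- combine
  have hK : (0:ℝ) ≤ 16*a₀/(9*(1-a₀)) := by positivity
  have h1r : (0:ℝ) < 1 - r := by linarith
  have hv : (0:ℝ) < (1-r)⁻¹ := inv_pos.mpr h1r
  have hu : (1-r) * (1-r)⁻¹ = 1 := mul_inv_cancel₀ (ne_of_gt h1r)
  have hA : ∑' n : ℕ, ‖a (n+1)‖ * r^(n+1) ≤ 1 - a₀ := by
    refine le_trans ht1 ?_
    have h2r : 2*r*(1-r)⁻¹ ≤ 1 := by
      have := mul_le_mul_of_nonneg_right (show 2*r ≤ 1 - r by linarith) hv.le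
      rw [hu] at this
      linarith
    nlinarith
  have hq : r^2/(1-r^2)^2 ≤ 9/64 := by
    have h8 : (8:ℝ)/9 ≤ 1 - r^2 := by nlinarith
    rw [div_le_div_iff₀ (by nlinarith) (by norm_num)]
    nlinarith
  have hKB : (16*a₀/(9*(1-a₀))) * ∑' n : ℕ, (n:ℝ) * ‖a n‖^2 * r^(2*n)
      ≤ a₀ * (1-a₀) := by
    have step1 := mul_le_mul_of_nonneg_left ht2 hK
    refine le_trans step1 ?_
    have heq : 16*a₀/(9*(1-a₀)) * ((2*(1-a₀))^2 * (r^2/(1-r^2)^2))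
        = (64*a₀*(1-a₀)/9) * (r^2/(1-r^2)^2) := by
      have hna : (1:ℝ) - a₀ ≠ 0 := ne_of_gt ha₀1
      have hnr : ((1:ℝ) - r^2) ≠ 0 := ne_of_gt (by nlinarith)
      field_simp
      ring
    rw [heq]
    have := mul_le_mul_of_nonneg_left hq (show (0:ℝ) ≤ 64*a₀*(1-a₀)/9 by positivity)
    calc (64*a₀*(1-a₀)/9) * (r^2/(1-r^2)^2) ≤ (64*a₀*(1-a₀)/9) * (9/64) := this
      _ = a₀*(1-a₀) := by ring
  nlinarith
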